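/- arXiv:2506.23803 — 2 statements merged into one kernel-verified Lean document; each statement's English description precedes it below -/
import Mathlib

section
/- Let ℋ ⊆ 𝕊 satisfy Assumption (A1) and let f : ℝ^d → ℝ, ν ∈ [0,1], L ∈ ℋ ∩ 𝕊₊₊ satisfy Assumption (A2). Then f is (tr L, ν)-Hölder smooth with respect to the norm R(x) := ‖P_ℋ(x xᵀ)‖_op^{1/2}: for all x₁, x₂ ∈ ℝ^d and every ∇f(x₁) ∈ ∂f(x₁), f(x₂) − f(x₁) − ⟨∇f(x₁), x₂ − x₁⟩ ≤ (1/(1+ν)) (tr L) · R(x₂ − x₁)^{1+ν}. -/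
open Matrix MeasureTheory
noncomputable section

/-- Spectral operator function `ψ(A)` of a symmetric (Hermitian) real matrix,
defined via an eigendecomposition; junk value `0` for non-Hermitian input. -/
def matFun {d : ℕ} (ψ : ℝ → ℝ) (A : Matrix (Fin d) (Fin d) ℝ) : Matrix (Fin d) (Fin d) ℝ :=
  if hA : A.IsHermitian then
    (hA.eigenvectorUnitary : Matrix (Fin d) (Fin d) ℝ) *
      Matrix.diagonal (fun i => ψ (hA.eigenvalues i)) *
      star (hA.eigenvectorUnitary : Matrix (Fin d) (Fin d) ℝ)
  else 0

/-- `P` is the orthogonal projection (w.r.t. the trace inner product `⟨A,B⟩ = tr(AB)`)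
onto the subspace `ℋ`. -/
structure IsOrthProj {d : ℕ} (ℋ : Submodule ℝ (Matrix (Fin d) (Fin d) ℝ))
    (P : Matrix (Fin d) (Fin d) ℝ →ₗ[ℝ] Matrix (Fin d) (Fin d) ℝ) : Prop where
  mem : ∀ A, P A ∈ ℋ
  perp : ∀ A, ∀ H ∈ ℋ, Matrix.trace ((A - P A) * H) = 0

/-- Assumption (A1): `ℋ ⊆ 𝕊` is a linear subspace of symmetric matrices, `P` is the
orthogonal projection onto `ℋ`, `P` maps `𝕊₊₊` into `𝕊₊₊`, and `ℋ` is closed under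
operator functions. -/
structure AssumptionA1 {d : ℕ} (ℋ : Submodule ℝ (Matrix (Fin d) (Fin d) ℝ))
    (P : Matrix (Fin d) (Fin d) ℝ →ₗ[ℝ] Matrix (Fin d) (Fin d) ℝ) : Prop where
  symm : ∀ A ∈ ℋ, A.IsHermitian
  proj : IsOrthProj ℋ P
  posdef : ∀ A : Matrix (Fin d) (Fin d) ℝ, A.PosDef → (P A).PosDef
  funClosed : ∀ A ∈ ℋ, ∀ ψ : ℝ → ℝ, matFun ψ A ∈ ℋ

/-- Spectral (operator) norm of a square real matrix. -/
def opNorm {d : ℕ} (A : Matrix (Fin d) (Fin d) ℝ) : ℝ :=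
  ‖Matrix.toEuclideanCLM (𝕜 := ℝ) A‖

/-- The norm `R(x) = ‖P_ℋ(x xᵀ)‖_op^{1/2}`. -/
def Rnorm {d : ℕ} (P : Matrix (Fin d) (Fin d) ℝ →ₗ[ℝ] Matrix (Fin d) (Fin d) ℝ)
    (x : Fin d → ℝ) : ℝ :=
  Real.sqrt (opNorm (P (vecMulVec x x)))

/-- `g` is a subgradient of `f` at `x`. -/
def SubgradAt {d : ℕ} (f : (Fin d → ℝ) → ℝ) (x g : Fin d → ℝ) : Prop :=
  ∀ y, f x + g ⬝ᵥ (y - x) ≤ f y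

private lemma diag_nn' {d : ℕ} {B : Matrix (Fin d) (Fin d) ℝ} (hB : B.PosSemidef) (i : Fin d) :
    0 ≤ B i i := by
  have := hB.dotProduct_mulVec_nonneg (Pi.single i 1)
  simpa [dotProduct, Pi.single_apply, mulVec_single] using this

private lemma eig_le' {d : ℕ} {M : Matrix (Fin d) (Fin d) ℝ} (hM : M.IsHermitian) (i : Fin d) :
    hM.eigenvalues i ≤ opNorm M := by
  set u : EuclideanSpace ℝ (Fin d) := hM.eigenvectorBasis i with hu
  have hnu : ‖u‖ = 1 := hM.eigenvectorBasis.orthonormal.1 i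
  have happ : Matrix.toEuclideanCLM (𝕜 := ℝ) M u = hM.eigenvalues i • u := by
    apply (WithLp.equiv 2 (Fin d → ℝ)).injective
    simp [Matrix.ofLp_toEuclideanCLM, Matrix.toLin'_apply, hu, hM.mulVec_eigenvectorBasis]
  have h1 : ‖Matrix.toEuclideanCLM (𝕜 := ℝ) M u‖ ≤ ‖Matrix.toEuclideanCLM (𝕜 := ℝ) M‖ * ‖u‖ :=
    ContinuousLinearMap.le_opNorm _ u
  rw [happ, norm_smul, hnu, mul_one, mul_one, Real.norm_eq_abs] at h1
  exact (le_abs_self _).trans h1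

private lemma trace_bound' {d : ℕ} {M L : Matrix (Fin d) (Fin d) ℝ} (hM : M.IsHermitian)
    (hL : L.PosSemidef) :
    Matrix.trace (M * L) ≤ opNorm M * Matrix.trace L := by
  set U : Matrix (Fin d) (Fin d) ℝ := (hM.eigenvectorUnitary : Matrix (Fin d) (Fin d) ℝ) with hU
  have hUU' : U * Uᴴ = 1 := by
    rw [hU, ← Matrix.star_eq_conjTranspose]
    exact (Matrix.mem_unitaryGroup_iff).mp hM.eigenvectorUnitary.2
  set B : Matrix (Fin d) (Fin d) ℝ := Uᴴ * L * U with hB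
  have hBpsd : B.PosSemidef := hL.conjTranspose_mul_mul_same U
  have htrB : Matrix.trace B = Matrix.trace L := by
    rw [hB, Matrix.trace_mul_cycle, hUU', Matrix.one_mul]
  set D : Matrix (Fin d) (Fin d) ℝ := Matrix.diagonal (RCLike.ofReal ∘ hM.eigenvalues) with hD
  have hspec : M = U * D * Uᴴ := by
    rw [hD, hU, ← Matrix.star_eq_conjTranspose]; exact hM.spectral_theorem
  have key : Matrix.trace (M * L) = ∑ i, hM.eigenvalues i * B i i := by
    conv_lhs => rw [hspec]
    rw [show U * D * Uᴴ * L = U * (D * (Uᴴ * L)) by noncomm_ring,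
      Matrix.trace_mul_comm, Matrix.mul_assoc, ← hB]
    simp [Matrix.trace, Matrix.diag, Matrix.diagonal_mul, hD]
  rw [key]
  calc ∑ i, hM.eigenvalues i * B i i
      ≤ ∑ i, opNorm M * B i i := by
        exact Finset.sum_le_sum fun i _ =>
          mul_le_mul_of_nonneg_right (eig_le' hM i) (diag_nn' hBpsd i)
    _ = opNorm M * Matrix.trace L := by rw [← Finset.mul_sum, ← htrB]; rfl

private lemma dot_eq_trace' {d : ℕ} (v : Fin d → ℝ) (L : Matrix (Fin d) (Fin d) ℝ) :
    v ⬝ᵥ (L *ᵥ v) = Matrix.trace (vecMulVec v v * L) := by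
  simp only [Matrix.trace, Matrix.diag, Matrix.mul_apply, vecMulVec_apply, dotProduct,
    Matrix.mulVec, Finset.mul_sum]
  rw [Finset.sum_comm]
  congr 1; ext i; congr 1; ext j; ring

/-- Matrix Hölder smoothness (Assumption (A2)) implies `(tr L, ν)`-Hölder smoothness
with respect to the non-Euclidean norm `R`. -/
theorem holder_wrt_Rnorm {d : ℕ}
    (ℋ : Submodule ℝ (Matrix (Fin d) (Fin d) ℝ))
    (P : Matrix (Fin d) (Fin d) ℝ →ₗ[ℝ] Matrix (Fin d) (Fin d) ℝ)
    (hA1 : AssumptionA1 ℋ P)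
    (f : (Fin d → ℝ) → ℝ) (hconv : ConvexOn ℝ Set.univ f)
    (xstar : Fin d → ℝ) (hmin : ∀ y, f xstar ≤ f y)
    (ν : ℝ) (hν : ν ∈ Set.Icc (0 : ℝ) 1)
    (L : Matrix (Fin d) (Fin d) ℝ) (hLmem : L ∈ ℋ) (hLpd : L.PosDef)
    (hHolder : ∀ x₁ x₂ g, SubgradAt f x₁ g →
      0 ≤ f x₂ - f x₁ - g ⬝ᵥ (x₂ - x₁) ∧
      f x₂ - f x₁ - g ⬝ᵥ (x₂ - x₁) ≤
        (1 / (1 + ν)) * Matrix.trace L ^ ((1 - ν) / 2) *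
          Real.sqrt ((x₂ - x₁) ⬝ᵥ (L *ᵥ (x₂ - x₁))) ^ (1 + ν)) :
    ∀ x₁ x₂ g, SubgradAt f x₁ g →
      f x₂ - f x₁ - g ⬝ᵥ (x₂ - x₁) ≤
        (1 / (1 + ν)) * Matrix.trace L * Rnorm P (x₂ - x₁) ^ (1 + ν) := by
  intro x₁ x₂ g hg
  obtain ⟨-, hub⟩ := hHolder x₁ x₂ g hg
  set v : Fin d → ℝ := x₂ - x₁ with hv
  set t : ℝ := Matrix.trace L with htdef
  set R : ℝ := Rnorm P v with hRdef
  set X : Matrix (Fin d) (Fin d) ℝ := vecMulVec v v with hX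
  set M : Matrix (Fin d) (Fin d) ℝ := P X with hM
  have hMherm : M.IsHermitian := hA1.symm _ (hA1.proj.mem X)
  have ht : 0 ≤ t := by
    have : Matrix.trace L = ∑ i, L i i := rfl
    rw [htdef, this]
    exact Finset.sum_nonneg fun i _ => diag_nn' hLpd.posSemidef i
  have hR : 0 ≤ R := Real.sqrt_nonneg _
  have hopR : opNorm M = R * R := by
    rw [hRdef]
    exact (Real.mul_self_sqrt (norm_nonneg _)).symm
  have hperp := hA1.proj.perp X L hLmem
  rw [sub_mul, Matrix.trace_sub, sub_eq_zero] at hperp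
  have h3 : v ⬝ᵥ (L *ᵥ v) ≤ R * R * t := by
    calc v ⬝ᵥ (L *ᵥ v) = Matrix.trace (X * L) := dot_eq_trace' v L
      _ = Matrix.trace (M * L) := hperp
      _ ≤ opNorm M * t := trace_bound' hMherm hLpd.posSemidef
      _ = R * R * t := by rw [hopR]
  have hs : Real.sqrt (v ⬝ᵥ (L *ᵥ v)) ≤ R * Real.sqrt t := by
    calc Real.sqrt (v ⬝ᵥ (L *ᵥ v)) ≤ Real.sqrt (R * R * t) := Real.sqrt_le_sqrt h3
      _ = R * Real.sqrt t := by
          rw [Real.sqrt_mul (mul_self_nonneg R), Real.sqrt_mul_self hR]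
  have hexp : (0 : ℝ) < 1 + ν := by linarith [hν.1]
  have key1 : Real.sqrt (v ⬝ᵥ (L *ᵥ v)) ^ (1 + ν) ≤ (R * Real.sqrt t) ^ (1 + ν) :=
    Real.rpow_le_rpow (Real.sqrt_nonneg _) hs hexp.le
  have hc : (0 : ℝ) ≤ 1 / (1 + ν) * t ^ ((1 - ν) / 2) :=
    mul_nonneg (by positivity) (Real.rpow_nonneg ht _)
  have ht2 : (Real.sqrt t) ^ (1 + ν) = t ^ ((1 + ν) / 2) := by
    rw [Real.sqrt_eq_rpow, ← Real.rpow_mul ht]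
    congr 1; ring
  have ht1 : t ^ ((1 - ν) / 2) * t ^ ((1 + ν) / 2) = t := by
    have hne : (1 - ν) / 2 + (1 + ν) / 2 ≠ 0 := by
      rw [show (1 - ν) / 2 + (1 + ν) / 2 = (1 : ℝ) from by ring]; norm_num
    rw [← Real.rpow_add' ht hne,
      show (1 - ν) / 2 + (1 + ν) / 2 = (1 : ℝ) from by ring, Real.rpow_one]
  calc f x₂ - f x₁ - g ⬝ᵥ (x₂ - x₁)
      ≤ 1 / (1 + ν) * t ^ ((1 - ν) / 2) * Real.sqrt (v ⬝ᵥ (L *ᵥ v)) ^ (1 + ν) := hub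
    _ ≤ 1 / (1 + ν) * t ^ ((1 - ν) / 2) * (R * Real.sqrt t) ^ (1 + ν) :=
        mul_le_mul_of_nonneg_left key1 hc
    _ = 1 / (1 + ν) * t * R ^ (1 + ν) := by
        rw [Real.mul_rpow hR (Real.sqrt_nonneg _), ht2,
          show 1 / (1 + ν) * t ^ ((1 - ν) / 2) * (R ^ (1 + ν) * t ^ ((1 + ν) / 2)) =
            1 / (1 + ν) * (t ^ ((1 - ν) / 2) * t ^ ((1 + ν) / 2)) * R ^ (1 + ν) from by ring,
          ht1]


end
end

section
/- Let ℋ ⊆ 𝕊 satisfy Assumption (A1), let δ > 0 and η = ℛ > 0, let g₀,…,g_K ∈ ℝ^d, S_k := Σ_{i=0}^k gᵢ gᵢᵀ, H_k := η (δ I + P_ℋ(S_k))^{−1/2}, and let x₀, x* ∈ ℝ^d with x_{k+1} := x_k − H_k g_k for k = 0,…,K. If R(x_k − x*) ≤ ℛ for all k = 0,…,K, where R(x) := ‖P_ℋ(x xᵀ)‖_op^{1/2}, then Σ_{k=0}^K ⟨g_k, x_k − x*⟩ ≤ (3/2) ℛ · tr((δ I + P_ℋ(S_K))^{1/2}). 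-/
open Matrix MeasureTheory
noncomputable section

variable {d : ℕ} {A : Matrix (Fin d) (Fin d) ℝ} {ψ φ : ℝ → ℝ}

lemma matFun_def (hA : A.IsHermitian) (ψ : ℝ → ℝ) :
    matFun ψ A = (hA.eigenvectorUnitary : Matrix (Fin d) (Fin d) ℝ) *
      Matrix.diagonal (fun i => ψ (hA.eigenvalues i)) *
      star (hA.eigenvectorUnitary : Matrix (Fin d) (Fin d) ℝ) := by
  rw [matFun, dif_pos hA]

lemma unit_mul_star (hA : A.IsHermitian) :
    (hA.eigenvectorUnitary : Matrix (Fin d) (Fin d) ℝ) *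
      star (hA.eigenvectorUnitary : Matrix (Fin d) (Fin d) ℝ) = 1 :=
  Matrix.mem_unitaryGroup_iff.mp hA.eigenvectorUnitary.2

lemma star_mul_unit (hA : A.IsHermitian) :
    star (hA.eigenvectorUnitary : Matrix (Fin d) (Fin d) ℝ) *
      (hA.eigenvectorUnitary : Matrix (Fin d) (Fin d) ℝ) = 1 :=
  Matrix.mem_unitaryGroup_iff'.mp hA.eigenvectorUnitary.2

lemma matFun_isHermitian (hA : A.IsHermitian) : (matFun ψ A).IsHermitian := by
  rw [matFun_def hA, Matrix.IsHermitian]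
  simp only [star_eq_conjTranspose, conjTranspose_mul, conjTranspose_conjTranspose,
    Matrix.diagonal_conjTranspose, mul_assoc]
  congr 2

lemma matFun_mul (hA : A.IsHermitian) :
    matFun ψ A * matFun φ A = matFun (fun t => ψ t * φ t) A := by
  rw [matFun_def hA, matFun_def hA, matFun_def hA]
  simp only [mul_assoc]
  rw [← mul_assoc (star (hA.eigenvectorUnitary : Matrix (Fin d) (Fin d) ℝ))
      (hA.eigenvectorUnitary : Matrix (Fin d) (Fin d) ℝ), star_mul_unit hA, one_mul,
    ← mul_assoc (Matrix.diagonal _) (Matrix.diagonal _), diagonal_mul_diagonal]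

lemma matFun_congr (hA : A.IsHermitian)
    (h : ∀ i, ψ (hA.eigenvalues i) = φ (hA.eigenvalues i)) : matFun ψ A = matFun φ A := by
  rw [matFun_def hA, matFun_def hA]
  congr 2
  exact congrArg _ (funext h)

lemma matFun_const_one (hA : A.IsHermitian) : matFun (fun _ => (1:ℝ)) A = 1 := by
  rw [matFun_def hA]
  simp only [Matrix.diagonal_one]
  rw [mul_one, unit_mul_star hA]

lemma matFun_id (hA : A.IsHermitian) : matFun (fun t => t) A = A := by
  rw [matFun_def hA]
  conv_rhs => rw [hA.spectral_theorem]
  norm_num [Function.comp]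

lemma trace_matFun (hA : A.IsHermitian) :
    Matrix.trace (matFun ψ A) = ∑ i, ψ (hA.eigenvalues i) := by
  rw [matFun_def hA, Matrix.trace_mul_comm, ← mul_assoc, star_mul_unit hA, one_mul,
    Matrix.trace_diagonal]

lemma dotProduct_matFun (hA : A.IsHermitian) (x : Fin d → ℝ) :
    x ⬝ᵥ (matFun ψ A *ᵥ x) =
      ∑ i, ψ (hA.eigenvalues i) *
        ((star (hA.eigenvectorUnitary : Matrix (Fin d) (Fin d) ℝ) *ᵥ x) i)^2 := by
  rw [matFun_def hA]
  rw [← mulVec_mulVec, ← mulVec_mulVec, dotProduct_mulVec x]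
  have hv : x ᵥ* (hA.eigenvectorUnitary : Matrix (Fin d) (Fin d) ℝ) =
      star (hA.eigenvectorUnitary : Matrix (Fin d) (Fin d) ℝ) *ᵥ x := by
    rw [← mulVec_transpose]
    congr 1
  rw [hv]
  simp only [dotProduct, mulVec_diagonal]
  exact Finset.sum_congr rfl fun i _ => by ring

lemma mulVec_star_unit_eq_zero (hA : A.IsHermitian) {x : Fin d → ℝ}
    (hx : star (hA.eigenvectorUnitary : Matrix (Fin d) (Fin d) ℝ) *ᵥ x = 0) : x = 0 := by
  have := congrArg (fun v => (hA.eigenvectorUnitary : Matrix (Fin d) (Fin d) ℝ) *ᵥ v) hx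
  simpa [mulVec_mulVec, unit_mul_star hA] using this

lemma matFun_posSemidef (hA : A.IsHermitian) (h : ∀ i, 0 ≤ ψ (hA.eigenvalues i)) :
    (matFun ψ A).PosSemidef := by
  refine PosSemidef.of_dotProduct_mulVec_nonneg (matFun_isHermitian hA) fun x => ?_
  have hq : (0:ℝ) ≤ x ⬝ᵥ (matFun ψ A *ᵥ x) := by
    rw [dotProduct_matFun hA]
    exact Finset.sum_nonneg fun i _ => mul_nonneg (h i) (sq_nonneg _)
  simpa using hq

lemma matFun_posDef (hA : A.IsHermitian) (h : ∀ i, 0 < ψ (hA.eigenvalues i)) :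
    (matFun ψ A).PosDef := by
  refine PosDef.of_dotProduct_mulVec_pos (matFun_isHermitian hA) fun x hx => ?_
  have hq : (0:ℝ) < x ⬝ᵥ (matFun ψ A *ᵥ x) := by
    rw [dotProduct_matFun hA]
    have hy : star (hA.eigenvectorUnitary : Matrix (Fin d) (Fin d) ℝ) *ᵥ x ≠ 0 :=
      fun h0 => hx (mulVec_star_unit_eq_zero hA h0)
    obtain ⟨j, hj⟩ : ∃ j, (star (hA.eigenvectorUnitary : Matrix (Fin d) (Fin d) ℝ) *ᵥ x) j ≠ 0 :=
      Function.ne_iff.mp hy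
    refine Finset.sum_pos' (fun i _ => mul_nonneg (h i).le (sq_nonneg _)) ⟨j, Finset.mem_univ j, ?_⟩
    exact mul_pos (h j) (by positivity)
  simpa using hq

/-- If all eigenvalues are ≤ 0, the quadratic form is ≤ 0. -/
lemma dotProduct_nonpos_of_eigenvalues_nonpos (hA : A.IsHermitian)
    (h : ∀ i, hA.eigenvalues i ≤ 0) (x : Fin d → ℝ) : x ⬝ᵥ (A *ᵥ x) ≤ 0 := by
  have := dotProduct_matFun (ψ := fun t => t) hA x
  rw [matFun_id hA] at this
  rw [this]
  exact Finset.sum_nonpos fun i _ => mul_nonpos_of_nonpos_of_nonneg (h i) (sq_nonneg _)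

lemma dotProduct_mulVec_symm {S : Matrix (Fin d) (Fin d) ℝ} (hS : S.IsHermitian)
    (x y : Fin d → ℝ) : x ⬝ᵥ (S *ᵥ y) = (S *ᵥ x) ⬝ᵥ y := by
  rw [dotProduct_mulVec, ← mulVec_transpose, show Sᵀ = S from hS]

lemma sqrtM_mul_self {X : Matrix (Fin d) (Fin d) ℝ} (hX : X.PosSemidef) :
    matFun Real.sqrt X * matFun Real.sqrt X = X := by
  rw [matFun_mul hX.1, matFun_congr hX.1 (φ := fun t => t)
    (fun i => Real.mul_self_sqrt (hX.eigenvalues_nonneg i)), matFun_id hX.1]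

lemma sqrtM_posSemidef {X : Matrix (Fin d) (Fin d) ℝ} (hX : X.PosSemidef) :
    (matFun Real.sqrt X).PosSemidef :=
  matFun_posSemidef hX.1 fun i => Real.sqrt_nonneg _

lemma sqrtM_posDef {X : Matrix (Fin d) (Fin d) ℝ} (hX : X.PosDef) :
    (matFun Real.sqrt X).PosDef :=
  matFun_posDef hX.1 fun i => Real.sqrt_pos.mpr (hX.eigenvalues_pos i)

lemma dotProduct_self_pos {v : Fin d → ℝ} (hv : v ≠ 0) : 0 < v ⬝ᵥ v := by
  rcases Function.ne_iff.mp hv with ⟨j, hj⟩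
  exact Finset.sum_pos' (fun i _ => mul_self_nonneg _) ⟨j, Finset.mem_univ j, mul_self_pos.mpr hj⟩

/-- Operator monotonicity of the matrix square root. -/
lemma sqrtM_monotone {X Y : Matrix (Fin d) (Fin d) ℝ} (hX : X.PosDef) (hY : Y.PosDef)
    (hXY : (Y - X).PosSemidef) :
    (matFun Real.sqrt Y - matFun Real.sqrt X).PosSemidef := by
  set SX := matFun Real.sqrt X with hSX
  set SY := matFun Real.sqrt Y with hSY
  have hSXh : SX.IsHermitian := matFun_isHermitian hX.1
  have hSYh : SY.IsHermitian := matFun_isHermitian hY.1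
  have hDh : (SX - SY).IsHermitian := hSXh.sub hSYh
  by_contra hcon
  -- extract a vector with negative quadratic form for SY - SX
  have hMh : (SY - SX).IsHermitian := hSYh.sub hSXh
  have hex : ∃ i, 0 < hDh.eigenvalues i := by
    by_contra hall
    push_neg at hall
    apply hcon
    refine PosSemidef.of_dotProduct_mulVec_nonneg hMh fun x => ?_
    have := dotProduct_nonpos_of_eigenvalues_nonpos hDh hall x
    have h2 : x ⬝ᵥ ((SY - SX) *ᵥ x) = -(x ⬝ᵥ ((SX - SY) *ᵥ x)) := by
      rw [sub_mulVec, sub_mulVec, dotProduct_sub, dotProduct_sub]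
      ring
    simpa [h2] using this
  obtain ⟨i, hi⟩ := hex
  set v : Fin d → ℝ := ⇑(hDh.eigenvectorBasis i) with hv
  have hv0 : v ≠ 0 := by
    intro h0
    apply hDh.eigenvectorBasis.orthonormal.ne_zero i
    ext j
    exact congrFun h0 j
  have heig : (SX - SY) *ᵥ v = hDh.eigenvalues i • v := hDh.mulVec_eigenvectorBasis i
  have hkey : SX *ᵥ v = SY *ᵥ v + hDh.eigenvalues i • v := by
    have := heig
    rw [sub_mulVec] at this
    linear_combination (norm := module) this
  -- quadratic forms
  have hXv : v ⬝ᵥ (X *ᵥ v) = (SX *ᵥ v) ⬝ᵥ (SX *ᵥ v) := by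
    conv_lhs => rw [← sqrtM_mul_self hX.posSemidef, ← mulVec_mulVec,
      dotProduct_mulVec_symm hSXh]
  have hYv : v ⬝ᵥ (Y *ᵥ v) = (SY *ᵥ v) ⬝ᵥ (SY *ᵥ v) := by
    conv_lhs => rw [← sqrtM_mul_self hY.posSemidef, ← mulVec_mulVec,
      dotProduct_mulVec_symm hSYh]
  have hexpand : (SX *ᵥ v) ⬝ᵥ (SX *ᵥ v) = (SY *ᵥ v) ⬝ᵥ (SY *ᵥ v)
      + 2 * hDh.eigenvalues i * ((SY *ᵥ v) ⬝ᵥ v) + hDh.eigenvalues i ^ 2 * (v ⬝ᵥ v) := by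
    rw [hkey]
    simp only [dotProduct_add, add_dotProduct, dotProduct_smul, smul_dotProduct,
      smul_eq_mul]
    have hc : (SY *ᵥ v) ⬝ᵥ v = v ⬝ᵥ (SY *ᵥ v) := by
      rw [dotProduct_comm]
    ring_nf
    rw [dotProduct_comm v (SY *ᵥ v)]
    ring
  have hposSY : 0 < v ⬝ᵥ (SY *ᵥ v) := by simpa using (sqrtM_posDef hY).dotProduct_mulVec_pos hv0
  have hXYv : v ⬝ᵥ (X *ᵥ v) ≤ v ⬝ᵥ (Y *ᵥ v) := by
    have := hXY.dotProduct_mulVec_nonneg v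
    simp only [star_trivial, RCLike.re_to_real] at this
    rw [sub_mulVec, dotProduct_sub] at this
    linarith
  have hvv : 0 < v ⬝ᵥ v := dotProduct_self_pos hv0
  have hSYvv : (SY *ᵥ v) ⬝ᵥ v = v ⬝ᵥ (SY *ᵥ v) := dotProduct_comm _ _
  nlinarith [hi, hposSY, hvv]

lemma trace_eq_sum_eig (hM : A.IsHermitian) : Matrix.trace A = ∑ i, hM.eigenvalues i := by
  conv_lhs => rw [← matFun_id hM]
  rw [trace_matFun hM]

lemma traceNonneg' {M : Matrix (Fin d) (Fin d) ℝ} (hM : M.PosSemidef) :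
    0 ≤ Matrix.trace M := by
  rw [trace_eq_sum_eig hM.1]
  exact Finset.sum_nonneg fun i _ => hM.eigenvalues_nonneg i

lemma trace_self_mul_conjTranspose_nonneg (M : Matrix (Fin d) (Fin d) ℝ) :
    0 ≤ Matrix.trace (M * Mᴴ) :=
  traceNonneg' (Matrix.posSemidef_self_mul_conjTranspose M)

/-- Concavity-type trace inequality: `2 tr √X ≤ tr (Y^{-1/2} X) + tr √Y`. -/
lemma trace_sqrt_concave {X Y : Matrix (Fin d) (Fin d) ℝ} (hX : X.PosSemidef) (hY : Y.PosDef) :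
    2 * Matrix.trace (matFun Real.sqrt X) ≤
      Matrix.trace (matFun (fun t => t ^ (-(1/2) : ℝ)) Y * X) + Matrix.trace (matFun Real.sqrt Y) := by
  set SX := matFun Real.sqrt X with hSXdef
  set Yq := matFun (fun t => t ^ (-(1/4) : ℝ)) Y with hYqdef
  set Yp := matFun (fun t => t ^ ((1/4) : ℝ)) Y with hYpdef
  have hYe : ∀ i, 0 < hY.1.eigenvalues i := hY.eigenvalues_pos
  have hqq : Yq * Yq = matFun (fun t => t ^ (-(1/2) : ℝ)) Y := by
    rw [hYqdef, matFun_mul hY.1]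
    refine matFun_congr hY.1 fun i => ?_
    rw [← Real.rpow_add (hYe i)]
    norm_num
  have hpp : Yp * Yp = matFun Real.sqrt Y := by
    rw [hYpdef, matFun_mul hY.1]
    refine matFun_congr hY.1 fun i => ?_
    rw [← Real.rpow_add (hYe i), Real.sqrt_eq_rpow]
    norm_num
  have hpq : Yp * Yq = 1 := by
    rw [hYpdef, hYqdef, matFun_mul hY.1]
    rw [matFun_congr hY.1 (φ := fun _ => (1:ℝ)) fun i => ?_, matFun_const_one hY.1]
    rw [← Real.rpow_add (hYe i)]
    norm_num
  have hqp : Yq * Yp = 1 := by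
    rw [hYpdef, hYqdef, matFun_mul hY.1]
    rw [matFun_congr hY.1 (φ := fun _ => (1:ℝ)) fun i => ?_, matFun_const_one hY.1]
    rw [← Real.rpow_add (hYe i)]
    norm_num
  have hSXh : SX.IsHermitian := matFun_isHermitian hX.1
  have hYqh : Yq.IsHermitian := matFun_isHermitian hY.1
  have hYph : Yp.IsHermitian := matFun_isHermitian hY.1
  set Z := Yq * SX with hZdef
  have hZH : Zᴴ = SX * Yq := by
    rw [hZdef, conjTranspose_mul, hSXh, hYqh]
  have hWH : Ypᴴ = Yp := hYph
  have key := trace_self_mul_conjTranspose_nonneg (Z - Yp)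
  have hexp : (Z - Yp) * (Z - Yp)ᴴ =
      Z * (SX * Yq) - Z * Yp - Yp * (SX * Yq) + Yp * Yp := by
    rw [conjTranspose_sub, hZH, hWH, sub_mul, mul_sub, mul_sub]
    abel
  rw [hexp] at key
  rw [Matrix.trace_add, Matrix.trace_sub, Matrix.trace_sub] at key
  have t1 : Matrix.trace (Z * (SX * Yq)) = Matrix.trace (matFun (fun t => t ^ (-(1/2) : ℝ)) Y * X) := by
    rw [hZdef]
    rw [show Yq * SX * (SX * Yq) = Yq * (SX * SX) * Yq by noncomm_ring]
    rw [Matrix.trace_mul_cycle, ← mul_assoc, hqq, mul_assoc, sqrtM_mul_self hX]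
  have t2 : Matrix.trace (Z * Yp) = Matrix.trace SX := by
    rw [hZdef, Matrix.trace_mul_cycle, hpq, one_mul]
  have t3 : Matrix.trace (Yp * (SX * Yq)) = Matrix.trace SX := by
    rw [Matrix.trace_mul_comm, mul_assoc, hqp, mul_one]
  have t4 : Matrix.trace (Yp * Yp) = Matrix.trace (matFun Real.sqrt Y) := by rw [hpp]
  rw [t1, t2, t3, t4] at key
  linarith

lemma quad_le_opNorm (N : Matrix (Fin d) (Fin d) ℝ) (v : Fin d → ℝ) :
    v ⬝ᵥ (N *ᵥ v) ≤ opNorm N * (v ⬝ᵥ v) := by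
  set T := Matrix.toEuclideanCLM (𝕜 := ℝ) N with hT
  set x : EuclideanSpace ℝ (Fin d) := (WithLp.equiv 2 _).symm v with hx
  have h1 : T x = (WithLp.equiv 2 _).symm (N *ᵥ v) := by
    rw [hx, hT]
    rfl
  have h2 : v ⬝ᵥ (N *ᵥ v) = inner (𝕜 := ℝ) x (T x) := by
    rw [h1, PiLp.inner_apply]
    simp [dotProduct, hx, mul_comm]
  have h3 : inner (𝕜 := ℝ) x (T x) ≤ ‖x‖ * ‖T x‖ := real_inner_le_norm x (T x)
  have h4 : ‖T x‖ ≤ ‖T‖ * ‖x‖ := T.le_opNorm x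
  have h5 : ‖x‖ ^ 2 = v ⬝ᵥ v := by
    rw [← real_inner_self_eq_norm_sq, PiLp.inner_apply]
    simp [dotProduct, hx, sq]
  have h6 : (0:ℝ) ≤ ‖x‖ := norm_nonneg x
  have h7 : (0:ℝ) ≤ ‖T‖ := norm_nonneg T
  have h8 : opNorm N = ‖T‖ := rfl
  rw [h2, ← h5, h8]
  nlinarith

lemma trace_vecMulVec_mul (w : Fin d → ℝ) (M : Matrix (Fin d) (Fin d) ℝ) :
    Matrix.trace (vecMulVec w w * M) = w ⬝ᵥ (M *ᵥ w) := by
  simp only [Matrix.trace, Matrix.diag, Matrix.mul_apply, vecMulVec_apply, dotProduct, mulVec,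
    Finset.mul_sum]
  rw [Finset.sum_comm]
  exact Finset.sum_congr rfl fun i _ => Finset.sum_congr rfl fun j _ => by ring

lemma trace_mul_le_opNorm_trace {M : Matrix (Fin d) (Fin d) ℝ} (hM : M.PosSemidef)
    (N : Matrix (Fin d) (Fin d) ℝ) :
    Matrix.trace (N * M) ≤ opNorm N * Matrix.trace M := by
  set SM := matFun Real.sqrt M with hSMdef
  have hSMh : SM.IsHermitian := matFun_isHermitian hM.1
  have hsym : ∀ i j, SM i j = SM j i := fun i j => by
    conv_lhs => rw [← hSMh]
    simp [conjTranspose_apply]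
  have hMM : Matrix.trace (N * M) = Matrix.trace (SM * (N * SM)) := by
    conv_lhs => rw [← sqrtM_mul_self hM]
    rw [← hSMdef, ← mul_assoc, Matrix.trace_mul_comm]
  have hdiag : ∀ i, (SM * (N * SM)) i i = (fun j => SM j i) ⬝ᵥ (N *ᵥ fun j => SM j i) := by
    intro i
    simp only [Matrix.mul_apply, dotProduct, mulVec]
    refine Finset.sum_congr rfl fun j _ => ?_
    rw [hsym i j]
  have htrM : Matrix.trace M = ∑ i, (fun j => SM j i) ⬝ᵥ (fun j => SM j i) := by
    conv_lhs => rw [← sqrtM_mul_self hM]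
    rw [← hSMdef]
    simp only [Matrix.trace, Matrix.diag, Matrix.mul_apply, dotProduct]
    exact Finset.sum_congr rfl fun i _ => Finset.sum_congr rfl fun j _ => by rw [hsym i j]
  rw [hMM, Matrix.trace, htrM, Finset.mul_sum]
  refine Finset.sum_le_sum fun i _ => ?_
  rw [show (SM * (N * SM)).diag i = (SM * (N * SM)) i i from rfl, hdiag i]
  exact quad_le_opNorm N _

section proj
variable {ℋ : Submodule ℝ (Matrix (Fin d) (Fin d) ℝ)}
  {P : Matrix (Fin d) (Fin d) ℝ →ₗ[ℝ] Matrix (Fin d) (Fin d) ℝ}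

lemma eq_zero_of_trace_mul_self {M : Matrix (Fin d) (Fin d) ℝ} (hsym : M.IsHermitian)
    (h0 : Matrix.trace (M * M) = 0) : M = 0 := by
  have hsq : Matrix.trace (M * M) = ∑ i, ∑ j, (M i j)^2 := by
    simp only [Matrix.trace, Matrix.diag, Matrix.mul_apply]
    refine Finset.sum_congr rfl fun i _ => Finset.sum_congr rfl fun j _ => ?_
    have : M j i = M i j := by
      conv_lhs => rw [← hsym]
      simp [conjTranspose_apply]
    rw [this]; ring
  rw [hsq] at h0
  ext i j
  have h1 : ∀ i ∈ Finset.univ (α := Fin d), (0:ℝ) ≤ ∑ j, (M i j)^2 :=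
    fun i _ => Finset.sum_nonneg fun j _ => sq_nonneg _
  have h2 := (Finset.sum_eq_zero_iff_of_nonneg h1).mp h0 i (Finset.mem_univ i)
  have h3 := (Finset.sum_eq_zero_iff_of_nonneg
    (fun j _ => sq_nonneg (M i j))).mp h2 j (Finset.mem_univ j)
  simpa using pow_eq_zero_iff (n := 2) (by norm_num) |>.mp h3

lemma proj_fix (hA1 : AssumptionA1 ℋ P) {A : Matrix (Fin d) (Fin d) ℝ} (hA : A ∈ ℋ) :
    P A = A := by
  have hmem : A - P A ∈ ℋ := Submodule.sub_mem ℋ hA (hA1.proj.mem A)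
  have h0 := hA1.proj.perp A (A - P A) hmem
  have hsym : (A - P A).IsHermitian := hA1.symm _ hmem
  have := eq_zero_of_trace_mul_self hsym h0
  have h4 : A - P A = 0 := this
  linear_combination (norm := module) -h4

lemma one_mem (hA1 : AssumptionA1 ℋ P) : (1 : Matrix (Fin d) (Fin d) ℝ) ∈ ℋ := by
  have := hA1.funClosed 0 (Submodule.zero_mem ℋ) (fun _ => 1)
  rwa [matFun_const_one Matrix.isHermitian_zero] at this

lemma trace_proj_pair (hA1 : AssumptionA1 ℋ P) (A : Matrix (Fin d) (Fin d) ℝ)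
    {M : Matrix (Fin d) (Fin d) ℝ} (hM : M ∈ ℋ) :
    Matrix.trace (A * M) = Matrix.trace (P A * M) := by
  have := hA1.proj.perp A M hM
  rw [Matrix.sub_mul, Matrix.trace_sub] at this
  linarith

lemma smul_one_posDef {ε : ℝ} (hε : 0 < ε) : (ε • (1 : Matrix (Fin d) (Fin d) ℝ)).PosDef := by
  refine PosDef.of_dotProduct_mulVec_pos ?_ fun v hv => ?_
  · unfold Matrix.IsHermitian
    rw [Matrix.conjTranspose_smul, Matrix.conjTranspose_one]
    simp
  · have : (ε • (1 : Matrix (Fin d) (Fin d) ℝ)) *ᵥ v = ε • v := by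
      rw [Matrix.smul_mulVec, Matrix.one_mulVec]
    rw [this]
    have : v ⬝ᵥ (ε • v) = ε * (v ⬝ᵥ v) := by simp [dotProduct_smul]
    simpa [this] using mul_pos hε (dotProduct_self_pos hv)

lemma vecMulVec_psd (v : Fin d → ℝ) : (vecMulVec v v).PosSemidef := by
  refine PosSemidef.of_dotProduct_mulVec_nonneg ?_ fun x => ?_
  · unfold Matrix.IsHermitian
    ext i j
    simp [conjTranspose_apply, vecMulVec_apply, mul_comm]
  · have h1 : (vecMulVec v v) *ᵥ x = (v ⬝ᵥ x) • v := by
      ext i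
      simp only [mulVec, vecMulVec_apply, dotProduct, Pi.smul_apply, smul_eq_mul, mul_assoc]
      rw [← Finset.mul_sum, mul_comm]
    have h2 : x ⬝ᵥ ((v ⬝ᵥ x) • v) = (v ⬝ᵥ x) * (x ⬝ᵥ v) := by
      simp [dotProduct_smul, mul_comm]
    have h3 : (0:ℝ) ≤ (v ⬝ᵥ x) * (x ⬝ᵥ v) := by
      rw [dotProduct_comm x v]
      exact mul_self_nonneg _
    simpa [h1, h2] using h3

lemma proj_psd (hA1 : AssumptionA1 ℋ P) {A : Matrix (Fin d) (Fin d) ℝ} (hA : A.PosSemidef) :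
    (P A).PosSemidef := by
  refine PosSemidef.of_dotProduct_mulVec_nonneg (hA1.symm _ (hA1.proj.mem A)) fun x => ?_
  have key : ∀ ε : ℝ, 0 < ε → 0 ≤ x ⬝ᵥ (P A *ᵥ x) + ε * (x ⬝ᵥ x) := by
    intro ε hε
    have hposdef : (A + ε • (1 : Matrix (Fin d) (Fin d) ℝ)).PosDef :=
      (smul_one_posDef hε).posSemidef_add hA
    have hP : (P (A + ε • (1 : Matrix (Fin d) (Fin d) ℝ))).PosDef := hA1.posdef _ hposdef
    have hPe : P (A + ε • (1 : Matrix (Fin d) (Fin d) ℝ))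
        = P A + ε • (1 : Matrix (Fin d) (Fin d) ℝ) := by
      rw [map_add, LinearMap.map_smul, proj_fix hA1 (one_mem hA1)]
    rcases eq_or_ne x 0 with rfl | hx
    · simp
    · have := hP.dotProduct_mulVec_pos hx
      rw [hPe] at this
      simp only [star_trivial, RCLike.re_to_real, Matrix.add_mulVec, dotProduct_add,
        Matrix.smul_mulVec, Matrix.one_mulVec, dotProduct_smul, smul_eq_mul] at this
      linarith
  by_contra hneg
  push_neg at hneg
  rcases eq_or_ne x 0 with rfl | hx
  · simp at hneg
  · have hxx : 0 < x ⬝ᵥ x := dotProduct_self_pos hx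
    have hq : x ⬝ᵥ (P A *ᵥ x) < 0 := by simpa using hneg
    have hε' : 0 < -(x ⬝ᵥ (P A *ᵥ x)) / (2 * (x ⬝ᵥ x)) :=
      div_pos (neg_pos.mpr hq) (mul_pos two_pos hxx)
    have hthis := key _ hε'
    have heq : -(x ⬝ᵥ (P A *ᵥ x)) / (2 * (x ⬝ᵥ x)) * (x ⬝ᵥ x) = -(x ⬝ᵥ (P A *ᵥ x)) / 2 := by
      field_simp
    rw [heq] at hthis
    linarith

lemma quad_le_Rnorm_sq_mul_trace (hA1 : AssumptionA1 ℋ P) (w : Fin d → ℝ)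
    {M : Matrix (Fin d) (Fin d) ℝ} (hMmem : M ∈ ℋ) (hMpsd : M.PosSemidef) :
    w ⬝ᵥ (M *ᵥ w) ≤ Rnorm P w ^ 2 * Matrix.trace M := by
  have h1 : w ⬝ᵥ (M *ᵥ w) = Matrix.trace (vecMulVec w w * M) :=
    (trace_vecMulVec_mul w M).symm
  have h2 : Matrix.trace (vecMulVec w w * M) = Matrix.trace (P (vecMulVec w w) * M) :=
    trace_proj_pair hA1 _ hMmem
  have h3 : Matrix.trace (P (vecMulVec w w) * M) = Matrix.trace (M * P (vecMulVec w w)) :=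
    Matrix.trace_mul_comm _ _
  have h4 : Matrix.trace (P (vecMulVec w w) * M) ≤ opNorm (P (vecMulVec w w)) * Matrix.trace M :=
    trace_mul_le_opNorm_trace hMpsd _
  have h5 : Rnorm P w ^ 2 = opNorm (P (vecMulVec w w)) :=
    Real.sq_sqrt (norm_nonneg _)
  rw [h1, h2, h5]
  exact h4
end proj


/-- Deterministic regret bound (core of Lemma 5):
`Σ_{k=0}^K ⟨g_k, x_k − x*⟩ ≤ (3/2) ℛ tr((δI + P_ℋ(S_K))^{1/2})`. -/
theorem regret_bound {d K : ℕ}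
    (ℋ : Submodule ℝ (Matrix (Fin d) (Fin d) ℝ))
    (P : Matrix (Fin d) (Fin d) ℝ →ₗ[ℝ] Matrix (Fin d) (Fin d) ℝ)
    (hA1 : AssumptionA1 ℋ P)
    (δ ℛ : ℝ) (hδ : 0 < δ) (hℛ : 0 < ℛ)
    (g : ℕ → Fin d → ℝ)
    (S : ℕ → Matrix (Fin d) (Fin d) ℝ)
    (hS : ∀ k, S k = ∑ i ∈ Finset.range (k + 1), vecMulVec (g i) (g i))
    (H : ℕ → Matrix (Fin d) (Fin d) ℝ)
    -- the stepsize parameter is η = ℛ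
    (hH : ∀ k, H k = ℛ • matFun (fun t => t ^ (-(1 / 2) : ℝ))
      (δ • (1 : Matrix (Fin d) (Fin d) ℝ) + P (S k)))
    (x : ℕ → Fin d → ℝ) (xstar : Fin d → ℝ)
    (hxrec : ∀ k ≤ K, x (k + 1) = x k - H k *ᵥ g k)
    (hbound : ∀ k ≤ K, Rnorm P (x k - xstar) ≤ ℛ) :
    ∑ k ∈ Finset.range (K + 1), g k ⬝ᵥ (x k - xstar) ≤
      (3 / 2) * ℛ * Matrix.trace (matFun Real.sqrt
        (δ • (1 : Matrix (Fin d) (Fin d) ℝ) + P (S K))) := by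
  -- scalar facts
  have scalar1 : ∀ t : ℝ, 0 < t → t ^ (-(1 / 2) : ℝ) * Real.sqrt t = 1 := by
    intro t ht
    rw [Real.sqrt_eq_rpow, ← Real.rpow_add ht]
    norm_num
  have scalar2 : ∀ t : ℝ, 0 < t → Real.sqrt t * t ^ (-(1 / 2) : ℝ) = 1 := by
    intro t ht
    rw [mul_comm]
    exact scalar1 t ht
  have scalar3 : ∀ t : ℝ, 0 < t → t ^ (-(1 / 2) : ℝ) * t = Real.sqrt t := by
    intro t ht
    rw [show t ^ (-(1 / 2) : ℝ) * t = t ^ (-(1 / 2) : ℝ) * t ^ (1 : ℝ) by rw [Real.rpow_one],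
      ← Real.rpow_add ht, Real.sqrt_eq_rpow]
    norm_num
  -- the matrix sequences
  set T : ℕ → Matrix (Fin d) (Fin d) ℝ :=
    fun k => δ • (1 : Matrix (Fin d) (Fin d) ℝ) +
      P (∑ i ∈ Finset.range k, vecMulVec (g i) (g i)) with hTdef
  have hTS : ∀ k, δ • (1 : Matrix (Fin d) (Fin d) ℝ) + P (S k) = T (k + 1) := by
    intro k
    rw [hS k]
  have hTmem : ∀ k, T k ∈ ℋ := fun k =>
    Submodule.add_mem ℋ (Submodule.smul_mem ℋ δ (one_mem hA1)) (hA1.proj.mem _)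
  have hsumpsd : ∀ k, (∑ i ∈ Finset.range k, vecMulVec (g i) (g i)).PosSemidef := by
    intro k
    exact Finset.sum_induction _ _ (fun a b ha hb => ha.add hb) Matrix.PosSemidef.zero
      (fun i _ => vecMulVec_psd (g i))
  have hTposdef : ∀ k, (T k).PosDef := by
    intro k
    have h1 : (δ • (1 : Matrix (Fin d) (Fin d) ℝ) +
        ∑ i ∈ Finset.range k, vecMulVec (g i) (g i)).PosDef :=
      (smul_one_posDef hδ).add_posSemidef (hsumpsd k)
    have h2 := hA1.posdef _ h1
    rwa [map_add, LinearMap.map_smul, proj_fix hA1 (one_mem hA1)] at h2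
  have hTh : ∀ k, (T k).IsHermitian := fun k => (hTposdef k).1
  have hdiff : ∀ k, T (k + 1) - T k = P (vecMulVec (g k) (g k)) := by
    intro k
    rw [hTdef]
    simp only
    rw [Finset.sum_range_succ, map_add]
    abel
  have hdiffpsd : ∀ k, (T (k + 1) - T k).PosSemidef := by
    intro k
    rw [hdiff k]
    exact proj_psd hA1 (vecMulVec_psd (g k))
  set B : ℕ → Matrix (Fin d) (Fin d) ℝ := fun k => matFun Real.sqrt (T k) with hBdef
  set C : ℕ → Matrix (Fin d) (Fin d) ℝ :=
    fun k => matFun (fun t => t ^ (-(1 / 2) : ℝ)) (T k) with hCdef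
  have hBmem : ∀ k, B k ∈ ℋ := fun k => hA1.funClosed _ (hTmem k) _
  have hCmem : ∀ k, C k ∈ ℋ := fun k => hA1.funClosed _ (hTmem k) _
  have hBh : ∀ k, (B k).IsHermitian := fun k => matFun_isHermitian (hTh k)
  have hCh : ∀ k, (C k).IsHermitian := fun k => matFun_isHermitian (hTh k)
  have hBpsd : ∀ k, (B k).PosSemidef := fun k => sqrtM_posSemidef (hTposdef k).posSemidef
  have hBC : ∀ k, B k * C k = 1 := by
    intro k
    rw [hBdef, hCdef]
    simp only
    rw [matFun_mul (hTh k), matFun_congr (hTh k) (φ := fun _ => (1:ℝ))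
      (fun i => scalar2 _ ((hTposdef k).eigenvalues_pos i)), matFun_const_one (hTh k)]
  have hCT : ∀ k, Matrix.trace (C k * T k) = Matrix.trace (B k) := by
    intro k
    have h1 : C k * T k = B k := by
      conv_lhs => rw [show T k = matFun (fun t => t) (T k) from (matFun_id (hTh k)).symm]
      rw [hCdef, hBdef]
      simp only
      rw [matFun_mul (hTh k)]
      exact matFun_congr (hTh k) (fun i => scalar3 _ ((hTposdef k).eigenvalues_pos i))
    rw [h1]
  -- the iterates
  set w : ℕ → Fin d → ℝ := fun k => x k - xstar with hwdef
  have hw : ∀ k, k ≤ K → w (k + 1) = w k - ℛ • (C (k + 1) *ᵥ g k) := by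
    intro k hk
    have h1 : x (k + 1) = x k - H k *ᵥ g k := hxrec k hk
    have h2 : H k = ℛ • C (k + 1) := by
      rw [hH k, hS k]
    rw [hwdef]
    simp only
    rw [h1, h2, Matrix.smul_mulVec, sub_right_comm]
  -- per-step inequality
  have hstep : ∀ k, k ≤ K → g k ⬝ᵥ w k =
      (1 / (2 * ℛ)) * (w k ⬝ᵥ (B (k + 1) *ᵥ w k) - w (k + 1) ⬝ᵥ (B (k + 1) *ᵥ w (k + 1)))
        + (ℛ / 2) * (g k ⬝ᵥ (C (k + 1) *ᵥ g k)) := by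
    intro k hk
    set u := w k
    set c := C (k + 1) *ᵥ g k with hcdef
    have hBc : B (k + 1) *ᵥ c = g k := by
      rw [hcdef, Matrix.mulVec_mulVec, hBC (k + 1), Matrix.one_mulVec]
    have hq2 : w (k + 1) ⬝ᵥ (B (k + 1) *ᵥ w (k + 1)) =
        u ⬝ᵥ (B (k + 1) *ᵥ u) - 2 * ℛ * (g k ⬝ᵥ u) + ℛ ^ 2 * (g k ⬝ᵥ c) := by
      rw [hw k hk]
      rw [Matrix.mulVec_sub, Matrix.mulVec_smul]
      rw [sub_dotProduct, dotProduct_sub, dotProduct_sub, smul_dotProduct, dotProduct_smul,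
        dotProduct_smul, smul_dotProduct]
      rw [hBc]
      have e1 : c ⬝ᵥ (B (k + 1) *ᵥ u) = g k ⬝ᵥ u := by
        rw [dotProduct_mulVec_symm (hBh (k + 1)), hBc]
      have e2 : u ⬝ᵥ g k = g k ⬝ᵥ u := dotProduct_comm _ _
      have e3 : c ⬝ᵥ g k = g k ⬝ᵥ c := dotProduct_comm _ _
      rw [e1, e2, e3]
      simp only [smul_eq_mul]
      ring
    have hℛ' : (2 : ℝ) * ℛ ≠ 0 := by positivity
    field_simp at hq2 ⊢
    linarith [hq2]
  -- summation
  set a : ℕ → ℝ := fun k => w k ⬝ᵥ (B (k + 1) *ᵥ w k) with hadef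
  set b : ℕ → ℝ := fun k => w (k + 1) ⬝ᵥ (B (k + 1) *ᵥ w (k + 1)) with hbdef
  set s : ℕ → ℝ := fun k => g k ⬝ᵥ (C (k + 1) *ᵥ g k) with hsdef
  have htotal : ∑ k ∈ Finset.range (K + 1), g k ⬝ᵥ w k =
      (1 / (2 * ℛ)) * (∑ k ∈ Finset.range (K + 1), (a k - b k))
        + (ℛ / 2) * (∑ k ∈ Finset.range (K + 1), s k) := by
    rw [Finset.mul_sum, Finset.mul_sum, ← Finset.sum_add_distrib]
    refine Finset.sum_congr rfl fun k hk => ?_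
    have hk' : k ≤ K := Nat.lt_succ_iff.mp (Finset.mem_range.mp hk)
    exact hstep k hk'
  -- quadratic bound helper
  have hquad : ∀ k, k ≤ K → ∀ M ∈ ℋ, M.PosSemidef →
      w k ⬝ᵥ (M *ᵥ w k) ≤ ℛ ^ 2 * Matrix.trace M := by
    intro k hk M hMmem hMpsd
    have h1 := quad_le_Rnorm_sq_mul_trace hA1 (w k) hMmem hMpsd
    have h2 : Rnorm P (w k) ^ 2 ≤ ℛ ^ 2 := by
      have h3 := hbound k hk
      have h4 : 0 ≤ Rnorm P (w k) := Real.sqrt_nonneg _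
      nlinarith
    have h5 := traceNonneg' hMpsd
    nlinarith
  -- bound A
  have claim : ∀ m : ℕ, m ≤ K + 1 →
      (∑ k ∈ Finset.range m, (a k - b k)) + w m ⬝ᵥ (B m *ᵥ w m)
        ≤ ℛ ^ 2 * Matrix.trace (B m) := by
    intro m
    induction m with
    | zero =>
      intro _
      simp only [Finset.range_zero, Finset.sum_empty, zero_add]
      exact hquad 0 (Nat.zero_le K) (B 0) (hBmem 0) (hBpsd 0)
    | succ m ih =>
      intro hm
      have hmK : m ≤ K := Nat.lt_succ_iff.mp hm
      have ihm := ih (Nat.le_succ_of_le hmK)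
      rw [Finset.sum_range_succ]
      have hcancel : (∑ k ∈ Finset.range m, (a k - b k)) + (a m - b m)
          + w (m + 1) ⬝ᵥ (B (m + 1) *ᵥ w (m + 1))
          = (∑ k ∈ Finset.range m, (a k - b k)) + a m := by
        rw [hbdef]
        ring
      rw [hcancel]
      have hmid : a m - w m ⬝ᵥ (B m *ᵥ w m) ≤ ℛ ^ 2 * (Matrix.trace (B (m + 1)) - Matrix.trace (B m)) := by
        have hMpsd : (B (m + 1) - B m).PosSemidef :=
          sqrtM_monotone (hTposdef m) (hTposdef (m + 1)) (hdiffpsd m)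
        have hMmem : B (m + 1) - B m ∈ ℋ := Submodule.sub_mem ℋ (hBmem (m + 1)) (hBmem m)
        have h6 := hquad m hmK _ hMmem hMpsd
        have h7 : w m ⬝ᵥ ((B (m + 1) - B m) *ᵥ w m) = a m - w m ⬝ᵥ (B m *ᵥ w m) := by
          rw [Matrix.sub_mulVec, dotProduct_sub, hadef]
        rw [h7] at h6
        rw [Matrix.trace_sub] at h6
        exact h6
      linarith
  have hlast : 0 ≤ w (K + 1) ⬝ᵥ (B (K + 1) *ᵥ w (K + 1)) := by
    have := (hBpsd (K + 1)).dotProduct_mulVec_nonneg (w (K + 1))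
    simpa using this
  have boundA : ∑ k ∈ Finset.range (K + 1), (a k - b k) ≤ ℛ ^ 2 * Matrix.trace (B (K + 1)) := by
    have := claim (K + 1) le_rfl
    linarith
  -- bound B
  have hsk : ∀ k, s k ≤ 2 * (Matrix.trace (B (k + 1)) - Matrix.trace (B k)) := by
    intro k
    have h1 : s k = Matrix.trace (vecMulVec (g k) (g k) * C (k + 1)) :=
      (trace_vecMulVec_mul _ _).symm
    have h2 : Matrix.trace (vecMulVec (g k) (g k) * C (k + 1))
        = Matrix.trace (P (vecMulVec (g k) (g k)) * C (k + 1)) :=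
      trace_proj_pair hA1 _ (hCmem (k + 1))
    have h3 : Matrix.trace (P (vecMulVec (g k) (g k)) * C (k + 1))
        = Matrix.trace (C (k + 1) * T (k + 1)) - Matrix.trace (C (k + 1) * T k) := by
      rw [← hdiff k, Matrix.sub_mul, Matrix.trace_sub, Matrix.trace_mul_comm (T (k+1)),
        Matrix.trace_mul_comm (T k)]
    have h4 := trace_sqrt_concave (hTposdef k).posSemidef (hTposdef (k + 1))
    rw [hCT (k + 1)] at h3
    -- h4 : 2 * tr (B k) ≤ tr (C (k+1) * T k) + tr (B (k+1))
    have h4' : 2 * Matrix.trace (B k) ≤ Matrix.trace (C (k + 1) * T k)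
        + Matrix.trace (B (k + 1)) := h4
    rw [h1, h2, h3]
    linarith
  have boundB : ∑ k ∈ Finset.range (K + 1), s k ≤ 2 * Matrix.trace (B (K + 1)) := by
    have h1 : ∑ k ∈ Finset.range (K + 1), s k
        ≤ ∑ k ∈ Finset.range (K + 1), 2 * (Matrix.trace (B (k + 1)) - Matrix.trace (B k)) :=
      Finset.sum_le_sum fun k _ => hsk k
    have h2 : ∑ k ∈ Finset.range (K + 1), 2 * (Matrix.trace (B (k + 1)) - Matrix.trace (B k))
        = 2 * (Matrix.trace (B (K + 1)) - Matrix.trace (B 0)) := by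
      rw [← Finset.mul_sum, Finset.sum_range_sub (fun k => Matrix.trace (B k))]
    have h3 : 0 ≤ Matrix.trace (B 0) := traceNonneg' (hBpsd 0)
    linarith
  -- conclusion
  have hgoalrhs : matFun Real.sqrt (δ • (1 : Matrix (Fin d) (Fin d) ℝ) + P (S K)) = B (K + 1) := by
    rw [hTS K]
  rw [hgoalrhs]
  have hLHS : ∑ k ∈ Finset.range (K + 1), g k ⬝ᵥ (x k - xstar)
      = ∑ k ∈ Finset.range (K + 1), g k ⬝ᵥ w k := rfl
  rw [hLHS, htotal]
  have c1 : (1 / (2 * ℛ)) * (∑ k ∈ Finset.range (K + 1), (a k - b k))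
      ≤ (1 / (2 * ℛ)) * (ℛ ^ 2 * Matrix.trace (B (K + 1))) := by
    apply mul_le_mul_of_nonneg_left boundA
    positivity
  have c2 : (ℛ / 2) * (∑ k ∈ Finset.range (K + 1), s k)
      ≤ (ℛ / 2) * (2 * Matrix.trace (B (K + 1))) := by
    apply mul_le_mul_of_nonneg_left boundB
    positivity
  have cfinal : (1 / (2 * ℛ)) * (ℛ ^ 2 * Matrix.trace (B (K + 1)))
      + (ℛ / 2) * (2 * Matrix.trace (B (K + 1)))
      = (3 / 2) * ℛ * Matrix.trace (B (K + 1)) := by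
    field_simp
    ring
  linarith

end
end
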